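/- (Backward error bound, small-update case.) Let A be an invertible n×n real matrix, let U, V be n×k real matrices, set λ = ‖U‖·‖V‖, β = ‖I + Vᵀ A⁻¹ U‖, and B = A + UVᵀ. Assume λ ≤ (1/2)·σ_min(A) and σ_min(A) ≤ 1. Let X be an invertible n×n matrix with ‖X − A⁻¹‖ ≤ ε₁ where ε₁ ≤ 1 and ε₁ < 1/(2‖A‖); assume I + Vᵀ X U is invertible; and let W be an invertible k×k matrix with ‖W − (I + Vᵀ X U)⁻¹‖ ≤ ε₂ such that W⁻¹ − Vᵀ X U is invertible, ε₂ ≤ 1, ε₂ < 1/(2(β + λ ε₁)), and 2(β + λ ε₁)² ε₂ < 1/2. Then the matrix X − X U W Vᵀ X is invertible and ‖B − (X − X U W Vᵀ X)⁻¹‖ ≤ 2 ε₁ ‖A‖² + 8 ε₂. -/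

import Mathlib

open Matrix
open scoped Matrix.Norms.L2Operator

/-!
Write `C = Vᵀ X U` and `D = (W⁻¹ - C)⁻¹`. Multiplying out shows that `X⁻¹ + U D Vᵀ` is a left
inverse of `X - X U W Vᵀ X`, so `B - (X - X U W Vᵀ X)⁻¹ = (A - X⁻¹) + U (1 - D) Vᵀ`.
Both terms are controlled by one Neumann-series estimate: if `‖P‖ ‖Q - P⁻¹‖ ≤ 1/2` then
`‖P - Q⁻¹‖ ≤ 2 ‖P‖² ‖Q - P⁻¹‖`. Applied to `(A, X)` it bounds the first term; applied to
`(1 + C, W)` and then to `(1, W⁻¹ - C)` it gives `‖1 - D‖ ≤ 4 ‖1 + C‖² ε₂`, and the small-update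
hypotheses give `‖1 + C‖ ≤ β + λ ε₁ ≤ 2` and `λ ≤ 1/2`.
-/

namespace Matrix

section Inverse

variable {m k R : Type*} [Fintype m] [Fintype k] [DecidableEq m] [DecidableEq k] [CommRing R]
  {X : Matrix m m R} {U : Matrix m k R} {W : Matrix k k R} {V : Matrix k m R}

theorem inv_add_mul_inv_sub_mul_mul_eq_one (hX : IsUnit X) (hW : IsUnit W)
    (hWC : IsUnit (W⁻¹ - V * X * U)) :
    (X⁻¹ + U * (W⁻¹ - V * X * U)⁻¹ * V) * (X - X * U * W * V * X) = 1 := by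
  set D := (W⁻¹ - V * X * U)⁻¹
  have hXdet := (isUnit_iff_isUnit_det _).mp hX
  have hDW : D * (W⁻¹ - V * X * U) * W = W := by
    rw [nonsing_inv_mul _ ((isUnit_iff_isUnit_det _).mp hWC), Matrix.one_mul]
  calc (X⁻¹ + U * D * V) * (X - X * U * W * V * X)
      = 1 + U * (D * (W⁻¹ - V * X * U) * W - W) * V * X := by
        simp only [Matrix.add_mul, Matrix.mul_sub, Matrix.sub_mul, Matrix.mul_assoc,
          nonsing_inv_mul_cancel_left _ _ hXdet, nonsing_inv_mul _ hXdet,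
          nonsing_inv_mul_cancel_left _ _ ((isUnit_iff_isUnit_det _).mp hW)]
        abel
    _ = 1 := by rw [hDW, sub_self, Matrix.mul_zero, Matrix.zero_mul, Matrix.zero_mul, add_zero]

theorem isUnit_sub_mul_mul_mul_mul (hX : IsUnit X) (hW : IsUnit W)
    (hWC : IsUnit (W⁻¹ - V * X * U)) : IsUnit (X - X * U * W * V * X) :=
  (isUnit_iff_isUnit_det _).mpr <|
    isUnit_det_of_left_inverse (inv_add_mul_inv_sub_mul_mul_eq_one hX hW hWC)

theorem inv_sub_mul_mul_mul_mul (hX : IsUnit X) (hW : IsUnit W)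
    (hWC : IsUnit (W⁻¹ - V * X * U)) :
    (X - X * U * W * V * X)⁻¹ = X⁻¹ + U * (W⁻¹ - V * X * U)⁻¹ * V :=
  inv_eq_left_inv (inv_add_mul_inv_sub_mul_mul_eq_one hX hW hWC)

theorem nonsing_inv_one_add_mul_self {M : Matrix m m R} (h : IsUnit (1 + M)) :
    (1 + M)⁻¹ * M = 1 - (1 + M)⁻¹ := by
  have := nonsing_inv_mul _ ((isUnit_iff_isUnit_det _).mp h)
  rw [Matrix.mul_add, Matrix.mul_one] at this
  exact eq_sub_of_add_eq' this

end Inverse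

section L2OpNorm

variable {𝕜 l m n p : Type*} [RCLike 𝕜] [Fintype l] [Fintype m] [Fintype n] [Fintype p]
  [DecidableEq m] [DecidableEq n] [DecidableEq p]

theorem l2_opNorm_mul_mul_le (P : Matrix l m 𝕜) (M : Matrix m n 𝕜) (Q : Matrix n p 𝕜) :
    ‖P * M * Q‖ ≤ ‖P‖ * ‖M‖ * ‖Q‖ :=
  (l2_opNorm_mul _ _).trans <| by gcongr; exact l2_opNorm_mul _ _

theorem l2_opNorm_one_le : ‖(1 : Matrix m m 𝕜)‖ ≤ 1 := by
  rw [cstar_norm_def, map_one]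
  exact ContinuousLinearMap.norm_id_le

theorem isUnit_one_add_of_l2_opNorm_lt_one {M : Matrix m m 𝕜} (h : ‖M‖ < 1) :
    IsUnit (1 + M) := by
  simpa using isUnit_one_sub_of_norm_lt_one (x := -M) (by rwa [norm_neg])

theorem l2_opNorm_inv_one_add_le {M : Matrix m m 𝕜} (h : ‖M‖ < 1) :
    ‖(1 + M)⁻¹‖ ≤ (1 - ‖M‖)⁻¹ := by
  have hinv : (1 + M)⁻¹ = 1 - (1 + M)⁻¹ * M := by
    rw [nonsing_inv_one_add_mul_self (isUnit_one_add_of_l2_opNorm_lt_one h), sub_sub_cancel]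
  have hle : ‖(1 + M)⁻¹‖ ≤ 1 + ‖(1 + M)⁻¹‖ * ‖M‖ :=
    calc ‖(1 + M)⁻¹‖ = ‖1 - (1 + M)⁻¹ * M‖ := by rw [← hinv]
      _ ≤ ‖(1 : Matrix m m 𝕜)‖ + ‖(1 + M)⁻¹ * M‖ := norm_sub_le _ _
      _ ≤ 1 + ‖(1 + M)⁻¹‖ * ‖M‖ := add_le_add l2_opNorm_one_le (l2_opNorm_mul _ _)
  rw [← one_div (1 - ‖M‖), le_div_iff₀ (by linarith)]
  linarith

/-- With `E = Q - P⁻¹` one has `Q = P⁻¹ (1 + P E)`, hence `P - Q⁻¹ = (1 + P E)⁻¹ (P E) P`. -/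
theorem l2_opNorm_sub_inv_le {P Q : Matrix m m 𝕜} {ε : ℝ} (hP : IsUnit P)
    (hQ : ‖Q - P⁻¹‖ ≤ ε) (hε : ‖P‖ * ε ≤ 1 / 2) : ‖P - Q⁻¹‖ ≤ 2 * ‖P‖ ^ 2 * ε := by
  set E := Q - P⁻¹
  have hPdet := (isUnit_iff_isUnit_det _).mp hP
  have hPE : ‖P * E‖ ≤ ‖P‖ * ε :=
    (l2_opNorm_mul _ _).trans (mul_le_mul_of_nonneg_left hQ (norm_nonneg _))
  have hinv : ‖(1 + P * E)⁻¹‖ ≤ 2 :=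
    (l2_opNorm_inv_one_add_le (by linarith)).trans (inv_le_of_inv_le₀ two_pos (by linarith))
  have hQ_eq : Q = P⁻¹ * (1 + P * E) := by
    rw [Matrix.mul_add, Matrix.mul_one, nonsing_inv_mul_cancel_left _ _ hPdet, add_sub_cancel]
  have key : P - Q⁻¹ = (1 + P * E)⁻¹ * (P * E) * P := by
    rw [hQ_eq, mul_inv_rev, nonsing_inv_nonsing_inv _ hPdet,
      nonsing_inv_one_add_mul_self (isUnit_one_add_of_l2_opNorm_lt_one (by linarith)),
      Matrix.sub_mul, Matrix.one_mul]
  calc ‖P - Q⁻¹‖ ≤ ‖(1 + P * E)⁻¹‖ * ‖P * E‖ * ‖P‖ := key ▸ l2_opNorm_mul_mul_le _ _ _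
    _ ≤ 2 * (‖P‖ * ε) * ‖P‖ := by gcongr
    _ = 2 * ‖P‖ ^ 2 * ε := by ring

theorem l2_opNorm_one_sub_inv_le {M : Matrix m m 𝕜} (h : ‖M - 1‖ ≤ 1 / 2) :
    ‖1 - M⁻¹‖ ≤ 2 * ‖M - 1‖ := by
  have h1 : ‖(1 : Matrix m m 𝕜)‖ ≤ 1 := l2_opNorm_one_le
  have hle := l2_opNorm_sub_inv_le (Q := M) isUnit_one (by rw [inv_one])
    ((mul_le_of_le_one_left (norm_nonneg _) h1).trans h)
  refine hle.trans ?_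
  gcongr
  exact mul_le_of_le_one_right zero_le_two (pow_le_one₀ (norm_nonneg _) h1)

/-- `W⁻¹ - C = 1 - ((1 + C) - W⁻¹)`, and `(1 + C) - W⁻¹` is small since `W` is close to
`(1 + C)⁻¹`. -/
theorem l2_opNorm_one_sub_inv_inv_sub_le {C W : Matrix m m 𝕜} {μ ε : ℝ} (hC : IsUnit (1 + C))
    (hCμ : ‖1 + C‖ ≤ μ) (hW : ‖W - (1 + C)⁻¹‖ ≤ ε) (hμε : μ * ε < 1 / 2)
    (hμε' : 2 * μ ^ 2 * ε < 1 / 2) : ‖1 - (W⁻¹ - C)⁻¹‖ ≤ 4 * μ ^ 2 * ε := by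
  have hε : 0 ≤ ε := (norm_nonneg _).trans hW
  have hG : ‖(1 + C) - W⁻¹‖ ≤ 2 * μ ^ 2 * ε :=
    (l2_opNorm_sub_inv_le hC hW (by nlinarith [norm_nonneg (1 + C)])).trans (by gcongr)
  have hsub : W⁻¹ - C - 1 = -((1 + C) - W⁻¹) := by abel
  have := l2_opNorm_one_sub_inv_le (M := W⁻¹ - C) (by rw [hsub, norm_neg]; linarith)
  rw [hsub, norm_neg] at this
  linarith

end L2OpNorm

section RealL2OpNorm

variable {m n : Type*} [Fintype m] [Fintype n] [DecidableEq m] [DecidableEq n]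

theorem l2_opNorm_transpose (M : Matrix m n ℝ) : ‖Mᵀ‖ = ‖M‖ := by
  rw [← conjTranspose_eq_transpose_of_trivial, l2_opNorm_conjTranspose]

theorem l2_opNorm_transpose_mul_mul_le (V : Matrix m n ℝ) (M : Matrix m m ℝ)
    (U : Matrix m n ℝ) : ‖Vᵀ * M * U‖ ≤ ‖U‖ * ‖V‖ * ‖M‖ :=
  (l2_opNorm_mul_mul_le _ _ _).trans_eq <| by rw [l2_opNorm_transpose]; ring

theorem l2_opNorm_mul_mul_transpose_le (U : Matrix m n ℝ) (M : Matrix n n ℝ)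
    (V : Matrix m n ℝ) : ‖U * M * Vᵀ‖ ≤ ‖U‖ * ‖V‖ * ‖M‖ :=
  (l2_opNorm_mul_mul_le _ _ _).trans_eq <| by rw [l2_opNorm_transpose]; ring

theorem l2_opNorm_one_add_transpose_mul_mul_le (U V : Matrix m n ℝ) (X S : Matrix m m ℝ) :
    ‖1 + Vᵀ * X * U‖ ≤ ‖1 + Vᵀ * S * U‖ + ‖U‖ * ‖V‖ * ‖X - S‖ := by
  have h : 1 + Vᵀ * X * U = (1 + Vᵀ * S * U) + Vᵀ * (X - S) * U := by
    rw [Matrix.mul_sub, Matrix.sub_mul, add_add_sub_cancel]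
  rw [h]
  exact (norm_add_le _ _).trans (add_le_add_right (l2_opNorm_transpose_mul_mul_le _ _ _) _)

theorem l2_opNorm_one_add_transpose_mul_mul_add_le_two {U V : Matrix m n ℝ} {S : Matrix m m ℝ}
    {ε : ℝ} (hsmall : ‖U‖ * ‖V‖ ≤ 1 / 2 * ‖S‖⁻¹) (hS : ‖S‖⁻¹ ≤ 1) (hε : ε ≤ 1) :
    ‖1 + Vᵀ * S * U‖ + ‖U‖ * ‖V‖ * ε ≤ 2 := by
  have hUVS : ‖U‖ * ‖V‖ * ‖S‖ ≤ 1 / 2 :=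
    calc ‖U‖ * ‖V‖ * ‖S‖ ≤ 1 / 2 * (‖S‖⁻¹ * ‖S‖) := by rw [← mul_assoc]; gcongr
      _ ≤ 1 / 2 := mul_le_of_le_one_right (by norm_num) inv_mul_le_one
  have hUVε : ‖U‖ * ‖V‖ * ε ≤ 1 / 2 :=
    (mul_le_of_le_one_right (by positivity) hε).trans (by linarith)
  grw [norm_add_le, l2_opNorm_one_le, l2_opNorm_transpose_mul_mul_le]
  linarith

end RealL2OpNorm

end Matrix

theorem mul_lt_half_of_lt_one_div_two_mul {a ε : ℝ} (hε : 0 ≤ ε) (h : ε < 1 / (2 * a)) :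
    a * ε < 1 / 2 := by
  rw [lt_div_iff₀ (one_div_pos.mp (hε.trans_lt h))] at h
  linarith

theorem smw_backward_error_small_update_general {n k : ℕ}
    (A : Matrix (Fin n) (Fin n) ℝ) (hA : IsUnit A)
    (U V : Matrix (Fin n) (Fin k) ℝ) (lam : ℝ) (hlam : lam = ‖U‖ * ‖V‖)
    (β : ℝ) (hβ : β = ‖(1 : Matrix (Fin k) (Fin k) ℝ) + Vᵀ * A⁻¹ * U‖)
    (B : Matrix (Fin n) (Fin n) ℝ) (hB : B = A + U * Vᵀ)
    (hsmall : lam ≤ (1 / 2) * ‖A⁻¹‖⁻¹) (hσ : ‖A⁻¹‖⁻¹ ≤ 1)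
    (X : Matrix (Fin n) (Fin n) ℝ) (hX : IsUnit X) (ε₁ ε₂ : ℝ)
    (hXA : ‖X - A⁻¹‖ ≤ ε₁) (hε₁1 : ε₁ ≤ 1) (hε₁ : ε₁ < 1 / (2 * ‖A‖))
    (hcapX : IsUnit ((1 : Matrix (Fin k) (Fin k) ℝ) + Vᵀ * X * U))
    (W : Matrix (Fin k) (Fin k) ℝ) (hW : IsUnit W)
    (hWcap : ‖W - ((1 : Matrix (Fin k) (Fin k) ℝ) + Vᵀ * X * U)⁻¹‖ ≤ ε₂)
    (hWinv : IsUnit (W⁻¹ - Vᵀ * X * U))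
    (hε₂ : ε₂ < 1 / (2 * (β + lam * ε₁)))
    (hε₂' : 2 * (β + lam * ε₁) ^ 2 * ε₂ < 1 / 2) :
    IsUnit (X - X * U * W * Vᵀ * X) ∧
      ‖B - (X - X * U * W * Vᵀ * X)⁻¹‖ ≤ 2 * ε₁ * ‖A‖ ^ 2 + 8 * ε₂ := by
  subst hlam hβ hB
  have hε₁0 : 0 ≤ ε₁ := (norm_nonneg _).trans hXA
  have hε₂0 : 0 ≤ ε₂ := (norm_nonneg _).trans hWcap
  have hcap : ‖1 + Vᵀ * X * U‖ ≤ ‖1 + Vᵀ * A⁻¹ * U‖ + ‖U‖ * ‖V‖ * ε₁ := by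
    grw [l2_opNorm_one_add_transpose_mul_mul_le U V X A⁻¹, hXA]
  have hcap_sq : (‖1 + Vᵀ * A⁻¹ * U‖ + ‖U‖ * ‖V‖ * ε₁) ^ 2 ≤ 2 ^ 2 :=
    pow_le_pow_left₀ ((norm_nonneg _).trans hcap)
      (l2_opNorm_one_add_transpose_mul_mul_add_le_two hsmall hσ hε₁1) 2
  have hD : ‖1 - (W⁻¹ - Vᵀ * X * U)⁻¹‖ ≤ 16 * ε₂ :=
    (l2_opNorm_one_sub_inv_inv_sub_le hcapX hcap hWcap
      (mul_lt_half_of_lt_one_div_two_mul hε₂0 hε₂) hε₂').trans (by nlinarith)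
  have hAX : ‖A - X⁻¹‖ ≤ 2 * ‖A‖ ^ 2 * ε₁ :=
    l2_opNorm_sub_inv_le hA hXA (mul_lt_half_of_lt_one_div_two_mul hε₁0 hε₁).le
  have hUV : ‖U‖ * ‖V‖ ≤ 1 / 2 := by linarith
  refine ⟨isUnit_sub_mul_mul_mul_mul hX hW hWinv, ?_⟩
  rw [inv_sub_mul_mul_mul_mul hX hW hWinv]
  calc ‖A + U * Vᵀ - (X⁻¹ + U * (W⁻¹ - Vᵀ * X * U)⁻¹ * Vᵀ)‖
      = ‖(A - X⁻¹) + U * (1 - (W⁻¹ - Vᵀ * X * U)⁻¹) * Vᵀ‖ := by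
        rw [Matrix.mul_sub, Matrix.sub_mul, Matrix.mul_one, add_sub_add_comm]
    _ ≤ ‖A - X⁻¹‖ + ‖U‖ * ‖V‖ * ‖1 - (W⁻¹ - Vᵀ * X * U)⁻¹‖ := by
        grw [norm_add_le, l2_opNorm_mul_mul_transpose_le]
    _ ≤ 2 * ‖A‖ ^ 2 * ε₁ + 1 / 2 * (16 * ε₂) := by gcongr
    _ = 2 * ε₁ * ‖A‖ ^ 2 + 8 * ε₂ := by ring

/-- Backward error bound for approximate SMW, small-update case.
Here σ_min(A) = ‖A⁻¹‖⁻¹. -/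
theorem smw_backward_error_small_update {n k : ℕ}
    (A : Matrix (Fin n) (Fin n) ℝ) (hA : IsUnit A)
    (U V : Matrix (Fin n) (Fin k) ℝ) (lam : ℝ) (hlam : lam = ‖U‖ * ‖V‖)
    (β : ℝ) (hβ : β = ‖(1 : Matrix (Fin k) (Fin k) ℝ) + Vᵀ * A⁻¹ * U‖)
    (B : Matrix (Fin n) (Fin n) ℝ) (hB : B = A + U * Vᵀ)
    (hsmall : lam ≤ (1 / 2) * ‖A⁻¹‖⁻¹) (hσ : ‖A⁻¹‖⁻¹ ≤ 1)
    (X : Matrix (Fin n) (Fin n) ℝ) (hX : IsUnit X) (ε₁ ε₂ : ℝ)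
    (hXA : ‖X - A⁻¹‖ ≤ ε₁) (hε₁1 : ε₁ ≤ 1) (hε₁ : ε₁ < 1 / (2 * ‖A‖))
    (hcapX : IsUnit ((1 : Matrix (Fin k) (Fin k) ℝ) + Vᵀ * X * U))
    (W : Matrix (Fin k) (Fin k) ℝ) (hW : IsUnit W)
    (hWcap : ‖W - ((1 : Matrix (Fin k) (Fin k) ℝ) + Vᵀ * X * U)⁻¹‖ ≤ ε₂)
    (hWinv : IsUnit (W⁻¹ - Vᵀ * X * U))
    (hε₂1 : ε₂ ≤ 1) (hε₂ : ε₂ < 1 / (2 * (β + lam * ε₁)))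
    (hε₂' : 2 * (β + lam * ε₁) ^ 2 * ε₂ < 1 / 2) :
    IsUnit (X - X * U * W * Vᵀ * X) ∧
      ‖B - (X - X * U * W * Vᵀ * X)⁻¹‖ ≤ 2 * ε₁ * ‖A‖ ^ 2 + 8 * ε₂ :=
  smw_backward_error_small_update_general A hA U V lam hlam β hβ B hB hsmall hσ X hX ε₁ ε₂ hXA hε₁1
    hε₁ hcapX W hW hWcap hWinv hε₂ hε₂'
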